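/- Let M be a multiplication and cancellation R-module and X a proper submodule of M. Then X is a φ-prime submodule of M if and only if for all submodules Y₁, Y₂ of M, Y₁Y₂ ⊆ X and Y₁Y₂ ⊄ φ(X) imply Y₁ ⊆ X or Y₂ ⊆ X. -/

import Mathlib

open MulOpposite Submodule

variable {R : Type*} [Ring R] {M : Type*} [AddCommGroup M] [Module Rᵐᵒᵖ M]

/-- The product `Y·A` of a set of elements of a right `R`-module `M` and a set of ring
elements: the submodule of all finite sums `Σ yᵢ·aᵢ` with `yᵢ ∈ Y`, `aᵢ ∈ A`. -/
def sProd (Y : Set M) (A : Set R) : Submodule Rᵐᵒᵖ M :=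
  Submodule.span Rᵐᵒᵖ {z | ∃ y ∈ Y, ∃ a ∈ A, z = op a • y}

/-- `(X :_R N) = {r : R | N·r ⊆ X}`. -/
def colR (X : Set M) (N : Set M) : Set R := {r | ∀ m ∈ N, op r • m ∈ X}

/-- `(X :_M A) = {m : M | m·A ⊆ X}`. -/
def colM (X : Set M) (A : Set R) : Set M := {m | ∀ r ∈ A, op r • m ∈ X}

/-- A function `φ : S(M) → S(M) ∪ {∅}` (values are either `∅` or submodules) with
`φ(X) ⊆ X` for every submodule `X`. -/
def GoodPhi (φ : Submodule Rᵐᵒᵖ M → Set M) : Prop :=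
  ∀ N : Submodule Rᵐᵒᵖ M, φ N ⊆ N ∧
    (φ N = (∅ : Set M) ∨ ∃ P : Submodule Rᵐᵒᵖ M, φ N = (P : Set M))

/-- `X` is a φ-prime submodule of the right `R`-module `M`. -/
def PhiPrime (φ : Submodule Rᵐᵒᵖ M → Set M) (X : Submodule Rᵐᵒᵖ M) : Prop :=
  X ≠ ⊤ ∧ ∀ (Y : Submodule Rᵐᵒᵖ M) (I : TwoSidedIdeal R),
    (sProd (Y : Set M) (I : Set R) : Set M) ⊆ (X : Set M) →
    ¬((sProd (Y : Set M) (I : Set R) : Set M) ⊆ φ X) →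
    (Y : Set M) ⊆ (X : Set M) ∨ (I : Set R) ⊆ colR (X : Set M) Set.univ

/-- `X` is a prime submodule of the right `R`-module `M`. -/
def PrimeSub (X : Submodule Rᵐᵒᵖ M) : Prop :=
  X ≠ ⊤ ∧ ∀ (Y : Submodule Rᵐᵒᵖ M) (I : TwoSidedIdeal R),
    (sProd (Y : Set M) (I : Set R) : Set M) ⊆ (X : Set M) →
    (Y : Set M) ⊆ (X : Set M) ∨ (I : Set R) ⊆ colR (X : Set M) Set.univ

/-- `X` is a weakly prime submodule of the right `R`-module `M`. -/
def WeaklyPrime (X : Submodule Rᵐᵒᵖ M) : Prop :=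
  X ≠ ⊤ ∧ ∀ (Y : Submodule Rᵐᵒᵖ M) (I : TwoSidedIdeal R),
    sProd (Y : Set M) (I : Set R) ≠ ⊥ →
    (sProd (Y : Set M) (I : Set R) : Set M) ⊆ (X : Set M) →
    (Y : Set M) ⊆ (X : Set M) ∨ (I : Set R) ⊆ colR (X : Set M) Set.univ

/-- `X` is an almost prime submodule of the right `R`-module `M`. -/
def AlmostPrime (X : Submodule Rᵐᵒᵖ M) : Prop :=
  X ≠ ⊤ ∧ ∀ (Y : Submodule Rᵐᵒᵖ M) (I : TwoSidedIdeal R),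
    (sProd (Y : Set M) (I : Set R) : Set M) ⊆ (X : Set M) →
    ¬((sProd (Y : Set M) (I : Set R) : Set M) ⊆
        (sProd (X : Set M) ((colR (X : Set M) Set.univ : Set R)) : Set M)) →
    (Y : Set M) ⊆ (X : Set M) ∨ (I : Set R) ⊆ colR (X : Set M) Set.univ

/-- `powAct X n = X (X :_R M)ⁿ`. -/
def powAct (X : Submodule Rᵐᵒᵖ M) : ℕ → Submodule Rᵐᵒᵖ M
  | 0 => X
  | n + 1 => sProd (powAct X n : Set M) ((colR (X : Set M) Set.univ : Set R))

/-- The product of two sets of ring elements: all finite sums `Σ aᵢbᵢ`, `aᵢ ∈ A`, `bᵢ ∈ B`. -/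
def idMul (A B : Set R) : Set R :=
  (AddSubmonoid.closure {x | ∃ a ∈ A, ∃ b ∈ B, x = a * b} : AddSubmonoid R)

/-- A prime (two-sided) ideal of a possibly noncommutative ring. -/
def TIPrime (P : TwoSidedIdeal R) : Prop :=
  (P : Set R) ≠ Set.univ ∧ ∀ I J : TwoSidedIdeal R,
    idMul (I : Set R) (J : Set R) ⊆ (P : Set R) →
    (I : Set R) ⊆ (P : Set R) ∨ (J : Set R) ⊆ (P : Set R)

/-- The radical `√A`: the intersection of all prime two-sided ideals containing `A`. -/
def radSet (A : Set R) : Set R :=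
  {x | ∀ P : TwoSidedIdeal R, TIPrime P → A ⊆ (P : Set R) → x ∈ (P : Set R)}

/-- A ψ-prime two-sided ideal of a possibly noncommutative ring. -/
def PsiPrime (ψ : TwoSidedIdeal R → Set R) (A : TwoSidedIdeal R) : Prop :=
  (A : Set R) ≠ Set.univ ∧ ∀ I J : TwoSidedIdeal R,
    idMul (I : Set R) (J : Set R) ⊆ (A : Set R) →
    ¬(idMul (I : Set R) (J : Set R) ⊆ ψ A) →
    (I : Set R) ⊆ (A : Set R) ∨ (J : Set R) ⊆ (A : Set R)

/-- The induced function `φ_Y` on submodules of `M/Y`: `φ_Y(X/Y) = (φ(X)+Y)/Y`. -/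
def phiQuot (φ : Submodule Rᵐᵒᵖ M → Set M) (Y : Submodule Rᵐᵒᵖ M) :
    Submodule Rᵐᵒᵖ (M ⧸ Y) → Set (M ⧸ Y) :=
  fun Q => Y.mkQ '' (φ (Q.comap Y.mkQ))

/-- The colon `(X :_R Y)` of two submodules, as a two-sided ideal of `R`. -/
def colTI (X Y : Submodule Rᵐᵒᵖ M) : TwoSidedIdeal R :=
  TwoSidedIdeal.mk' (colR (X : Set M) (Y : Set M))
    (by intro m hm; simp)
    (by intro x y hx hy m hm
        rw [op_add, add_smul]
        exact X.add_mem (hx m hm) (hy m hm))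
    (by intro x hx m hm
        rw [op_neg, neg_smul]
        exact X.neg_mem (hx m hm))
    (by intro x y hy m hm
        rw [op_mul, mul_smul]
        exact hy _ (Y.smul_mem (op x) hm))
    (by intro x y hx m hm
        rw [op_mul, mul_smul]
        exact X.smul_mem (op y) (hx m hm))

/-- The colon `(X :_M I)` as a submodule of `M`, for a two-sided ideal `I`. -/
def colMS (X : Submodule Rᵐᵒᵖ M) (I : TwoSidedIdeal R) : Submodule Rᵐᵒᵖ M where
  carrier := colM (X : Set M) (I : Set R)
  add_mem' := by
    intro a b ha hb r hr
    rw [smul_add]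
    exact X.add_mem (ha r hr) (hb r hr)
  zero_mem' := by
    intro r hr
    rw [smul_zero]
    exact X.zero_mem
  smul_mem' := by
    intro c m hm r hr
    rw [← mul_smul, show op r * c = op (unop c * r) from by rw [op_mul, op_unop]]
    exact hm _ (I.mul_mem_left _ _ hr)

/-- `M` is a multiplication right `R`-module: every submodule `X` equals `M(X :_R M)`. -/
def IsMultiplication (R : Type*) [Ring R] (M : Type*) [AddCommGroup M]
    [Module Rᵐᵒᵖ M] : Prop :=
  ∀ X : Submodule Rᵐᵒᵖ M, X = sProd (Set.univ : Set M) ((colR (X : Set M) Set.univ : Set R))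

/-- The product `XY = M(X :_R M)(Y :_R M)` of two submodules of a multiplication module. -/
def mprod (X Y : Submodule Rᵐᵒᵖ M) : Submodule Rᵐᵒᵖ M :=
  sProd ((sProd (Set.univ : Set M) ((colR (X : Set M) Set.univ : Set R)) : Submodule Rᵐᵒᵖ M) : Set M)
    ((colR (Y : Set M) Set.univ : Set R))

/-- A φ-m-system in a right `R`-module `M`. -/
def PhiMSystem (φ : Submodule Rᵐᵒᵖ M → Set M) (S : Set M) : Prop :=
  S.Nonempty ∧ ∀ (Y₁ Y₂ : Submodule Rᵐᵒᵖ M) (I : TwoSidedIdeal R),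
    ((Y₁ ⊔ Y₂ : Submodule Rᵐᵒᵖ M) : Set M) ∩ S ≠ ∅ →
    ((Y₁ ⊔ sProd (Set.univ : Set M) (I : Set R) : Submodule Rᵐᵒᵖ M) : Set M) ∩ S ≠ ∅ →
    ¬((sProd (Y₂ : Set M) (I : Set R) : Set M) ⊆ φ (Submodule.span Rᵐᵒᵖ Sᶜ)) →
    ((Y₁ ⊔ sProd (Y₂ : Set M) (I : Set R) : Submodule Rᵐᵒᵖ M) : Set M) ∩ S ≠ ∅

/-!
In a multiplication module `Y₁Y₂ = Y₁(Y₂ :_R M)` and `Y ⊆ X` iff `(Y :_R M) ⊆ (X :_R M)`, so the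
submodule condition for the pair `Y₁, Y₂` is the φ-prime condition for `Y₁` and the ideal
`(Y₂ :_R M)`. Conversely, cancellation gives `(MI :_R M) = I`, hence `YI = Y(MI)` and
`MI ⊆ X` iff `I ⊆ (X :_R M)`, so the φ-prime condition for `Y, I` is the submodule condition
for `Y, MI`.
-/

theorem coe_colTI_top (Z : Submodule Rᵐᵒᵖ M) :
    ((colTI Z ⊤ : TwoSidedIdeal R) : Set R) = colR (Z : Set M) Set.univ := by
  ext r
  exact (TwoSidedIdeal.mem_mk' ..).trans (by simp [colR])

theorem sProd_univ_le_iff {A : Set R} {X : Submodule Rᵐᵒᵖ M} :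
    sProd (Set.univ : Set M) A ≤ X ↔ A ⊆ colR (X : Set M) Set.univ := by
  rw [sProd, Submodule.span_le]
  constructor
  · intro h r hr m _
    exact h ⟨m, trivial, r, hr, rfl⟩
  · rintro h z ⟨m, -, r, hr, rfl⟩
    exact h hr m trivial

def IsCancellation (R : Type*) [Ring R] (M : Type*) [AddCommGroup M] [Module Rᵐᵒᵖ M] :
    Prop :=
  ∀ I J : TwoSidedIdeal R,
    sProd (Set.univ : Set M) (I : Set R) = sProd (Set.univ : Set M) (J : Set R) → I = J

namespace IsMultiplication

theorem le_iff_colR_subset (hm : IsMultiplication R M) {Y X : Submodule Rᵐᵒᵖ M} :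
    Y ≤ X ↔ (colR (Y : Set M) Set.univ : Set R) ⊆ colR (X : Set M) Set.univ := by
  conv_lhs => rw [hm Y]
  exact sProd_univ_le_iff

theorem mprod_eq (hm : IsMultiplication R M) (Y₁ Y₂ : Submodule Rᵐᵒᵖ M) :
    mprod Y₁ Y₂ = sProd (Y₁ : Set M) (colTI Y₂ ⊤ : Set R) := by
  rw [mprod, ← hm Y₁, coe_colTI_top]

/-- In a cancellation module `I = (MI :_R M)`, because `MI = M(MI :_R M)`. -/
theorem colR_sProd_univ (hm : IsMultiplication R M) (hc : IsCancellation R M)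
    (I : TwoSidedIdeal R) :
    colR ((sProd (Set.univ : Set M) (I : Set R) : Submodule Rᵐᵒᵖ M) : Set M) Set.univ =
      (I : Set R) := by
  rw [← coe_colTI_top, ← hc I (colTI _ ⊤) (by rw [coe_colTI_top]; exact hm _)]

theorem mprod_sProd_univ (hm : IsMultiplication R M) (hc : IsCancellation R M)
    (Y : Submodule Rᵐᵒᵖ M) (I : TwoSidedIdeal R) :
    mprod Y (sProd (Set.univ : Set M) (I : Set R)) = sProd (Y : Set M) (I : Set R) := by
  rw [mprod, ← hm Y, colR_sProd_univ hm hc]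

end IsMultiplication

theorem stmt_16_general (hm : IsMultiplication R M)
    (hc : ∀ I J : TwoSidedIdeal R,
      sProd (Set.univ : Set M) (I : Set R) = sProd (Set.univ : Set M) (J : Set R) →
      I = J)
    (φ : Submodule Rᵐᵒᵖ M → Set M)
    (X : Submodule Rᵐᵒᵖ M) (hX : X ≠ ⊤) :
    PhiPrime φ X ↔
      ∀ Y₁ Y₂ : Submodule Rᵐᵒᵖ M,
        (mprod Y₁ Y₂ : Set M) ⊆ (X : Set M) →
        ¬((mprod Y₁ Y₂ : Set M) ⊆ φ X) →
        (Y₁ : Set M) ⊆ (X : Set M) ∨ (Y₂ : Set M) ⊆ (X : Set M) := by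
  constructor
  · rintro ⟨-, hprime⟩ Y₁ Y₂ hle hφ
    rw [IsMultiplication.mprod_eq hm] at hle hφ
    refine (hprime Y₁ _ hle hφ).imp id fun hcol => ?_
    rw [coe_colTI_top] at hcol
    exact SetLike.coe_subset_coe.2 ((IsMultiplication.le_iff_colR_subset hm).2 hcol)
  · refine fun H => ⟨hX, fun Y I hle hφ => ?_⟩
    rw [← IsMultiplication.mprod_sProd_univ hm hc] at hle hφ
    exact (H Y _ hle hφ).imp id fun hI => sProd_univ_le_iff.1 (SetLike.coe_subset_coe.1 hI)

/-- Let `M` be a multiplication and cancellation module and `X` a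
proper submodule of `M`. Then `X` is φ-prime iff for all submodules `Y₁, Y₂`,
`Y₁Y₂ ⊆ X` and `Y₁Y₂ ⊄ φ(X)` imply `Y₁ ⊆ X` or `Y₂ ⊆ X`. -/
theorem stmt_16 (hm : IsMultiplication R M)
    (hc : ∀ I J : TwoSidedIdeal R,
      sProd (Set.univ : Set M) (I : Set R) = sProd (Set.univ : Set M) (J : Set R) →
      I = J)
    (φ : Submodule Rᵐᵒᵖ M → Set M) (hφ : GoodPhi φ)
    (X : Submodule Rᵐᵒᵖ M) (hX : X ≠ ⊤) :
    PhiPrime φ X ↔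
      ∀ Y₁ Y₂ : Submodule Rᵐᵒᵖ M,
        (mprod Y₁ Y₂ : Set M) ⊆ (X : Set M) →
        ¬((mprod Y₁ Y₂ : Set M) ⊆ φ X) →
        (Y₁ : Set M) ⊆ (X : Set M) ∨ (Y₂ : Set M) ⊆ (X : Set M) :=
  stmt_16_general hm hc φ X hX
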